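/- Let (Ω,d,μ) be a metric probability space satisfying Conditions 1' and 2. Then for every f ∈ Lip(Ω) ∩ L¹(Ω) and all 0 < a < b < 1: cap₁(a,b) · (f*_μ(a) − f*_μ(b)) ≤ ∫_{{x: f*_μ(b) < |f(x)| < f*_μ(a)}} |∇f(x)| dμ(x). -/

import Mathlib

open MeasureTheory Set Filter Topology
open scoped ENNReal NNReal

noncomputable section

/-- The distribution function `μ_f(t) = μ{x : |f x| > t}` (as a real number). -/
def distrib {α : Type*} [MeasurableSpace α] (μ : Measure α) (f : α → ℝ) (t : ℝ) : ℝ :=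
  (μ {x | t < |f x|}).toReal

/-- The decreasing rearrangement `f*_μ(s) = inf{t ≥ 0 : μ_f(t) ≤ s}`. -/
def rearr {α : Type*} [MeasurableSpace α] (μ : Measure α) (f : α → ℝ) (s : ℝ) : ℝ :=
  sInf {t : ℝ | 0 ≤ t ∧ distrib μ f t ≤ s}

/-- The maximal function `f**_μ(t) = (1/t) ∫₀ᵗ f*_μ(s) ds`. -/
def rearr2 {α : Type*} [MeasurableSpace α] (μ : Measure α) (f : α → ℝ) (t : ℝ) : ℝ :=
  (1 / t) * ∫ s in (0:ℝ)..t, rearr μ f s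

/-- The modulus of the gradient `|∇f|(x) = limsup_{d(x,y)→0} |f x - f y| / d(x,y)`. -/
def gradMod {Ω : Type*} [MetricSpace Ω] (f : Ω → ℝ) (x : Ω) : ℝ :=
  limsup (fun y => |f x - f y| / dist x y) (𝓝[≠] x)

/-- The Minkowski content `μ⁺(A) = liminf_{h→0⁺} (μ(A_h) - μ(A))/h`. -/
def minkContent {Ω : Type*} [MetricSpace Ω] [MeasurableSpace Ω] (μ : Measure Ω)
    (A : Set Ω) : ℝ :=
  liminf (fun h => ((μ (Metric.thickening h A)).toReal - (μ A).toReal) / h) (𝓝[>] 0)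

/-- The isoperimetric profile: the (pointwise maximal) function with
`μ⁺(A) ≥ I(μ(A))` for all Borel sets `A`. -/
def isoProfile {Ω : Type*} [MetricSpace Ω] [MeasurableSpace Ω] (μ : Measure Ω) (t : ℝ) : ℝ :=
  sInf (minkContent μ '' {A : Set Ω | MeasurableSet A ∧ (μ A).toReal = t})

/-- Condition 1': the isoperimetric profile is continuous, positive on `(0,1)`,
and vanishes at `0`. -/
def Condition1' {Ω : Type*} [MetricSpace Ω] [MeasurableSpace Ω] (μ : Measure Ω) : Prop :=
  ContinuousOn (isoProfile μ) (Icc 0 1) ∧ (∀ t ∈ Ioo (0:ℝ) 1, 0 < isoProfile μ t) ∧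
    isoProfile μ 0 = 0

/-- Condition 2: for Lipschitz `f` and every `c`, `|∇f| = 0` μ-a.e. on `{f = c}`. -/
def Condition2 {Ω : Type*} [MetricSpace Ω] [MeasurableSpace Ω] (μ : Measure Ω) : Prop :=
  ∀ f : Ω → ℝ, (∃ K, LipschitzWith K f) → ∀ c : ℝ,
    ∀ᵐ x ∂(μ.restrict {x | f x = c}), gradMod f x = 0

/-- The weights `w_q` built from the isoperimetric profile. -/
def wq (I : ℝ → ℝ) (q t : ℝ) : ℝ :=
  if q = 1 then sInf ((fun s => I s / s) '' Ioo 0 t)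
  else ((1 / t) * ∫ s in (0:ℝ)..t, (s / I s) ^ (q / (q - 1))) ^ ((1 - q) / q)

/-- Local absolute continuity on `(0,1)`. -/
def LocAbsContOn01 (g : ℝ → ℝ) : Prop :=
  ∀ a b : ℝ, 0 < a → a < b → b < 1 → ∀ ε > 0, ∃ δ > 0,
    ∀ (n : ℕ) (c d : Fin n → ℝ),
      (∀ k, a ≤ c k ∧ c k ≤ d k ∧ d k ≤ b) →
      (Pairwise fun j k => Ioo (c j) (d j) ∩ Ioo (c k) (d k) = ∅) →
      (∑ k, (d k - c k)) ≤ δ → (∑ k, |g (d k) - g (c k)|) ≤ ε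

/-- `f` is Lipschitz on balls. -/
def LipschitzOnBalls {Ω : Type*} [MetricSpace Ω] (f : Ω → ℝ) : Prop :=
  ∀ (x : Ω) (r : ℝ), ∃ K, LipschitzOnWith K f (Metric.ball x r)

/-- The `q`-capacity profile
`cap_q(a,b) = inf{‖|∇Φ|‖_{L^q} : Φ : Ω → [0,1] Lipschitz on balls, μ{Φ=1} ≥ a, μ{Φ=0} ≥ 1-b}`. -/
def capProfile {Ω : Type*} [MetricSpace Ω] [MeasurableSpace Ω] (μ : Measure Ω)
    (q a b : ℝ) : ℝ :=
  sInf {r : ℝ | ∃ Φ : Ω → ℝ, LipschitzOnBalls Φ ∧ (∀ x, Φ x ∈ Icc (0:ℝ) 1) ∧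
    a ≤ (μ {x | Φ x = 1}).toReal ∧ 1 - b ≤ (μ {x | Φ x = 0}).toReal ∧
    r = (∫ x, |gradMod Φ x| ^ q ∂μ) ^ (1 / q)}


/-!
Write `t₁ = f*_μ(a)` and `t₂ = f*_μ(b)`; when `t₂ < t₁` the ramp
`Φ = max 0 (min 1 ((|f| - t₂) / (t₁ - t₂)))` is admissible for `cap₁(a,b)`: it is `1` on
`{|f| ≥ t₁}`, of measure at least `a` (left limits of the distribution function), and `0` on
`{|f| ≤ t₂}`, of measure at least `1 - b` (right continuity). Pointwise `|∇Φ| ≤ |∇f| / (t₁ - t₂)`;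
moreover `|∇Φ| = 0` where `|f| ∉ [t₂, t₁]`, since `Φ` is locally constant there, and, by
Condition 2, almost everywhere on the level sets `|f| = t₁` and `|f| = t₂`. Integrating gives
`cap₁(a,b) ≤ (t₁ - t₂)⁻¹ ∫_{t₂ < |f| < t₁} |∇f|`.

For Lipschitz `f`, `|∇f|` is measurable because it is the infimum over `n` of the suprema of the
difference quotients over balls of radius `1 / (n + 1)`, each of which is lower semicontinuous.
-/

section GradMod

variable {Ω : Type*} [MetricSpace Ω] {f g : Ω → ℝ} {x : Ω} {K : ℝ≥0}

/-- Junk value: a `limsup` along `⊥` in `ℝ` is `sInf univ = 0`. -/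
lemma gradMod_eq_zero_of_nhdsNE_eq_bot (hx : 𝓝[≠] x = ⊥) : gradMod f x = 0 := by
  simp [gradMod, limsup_eq, hx]

lemma abs_sub_div_dist_le_of_lipschitzWith (hf : LipschitzWith K f) (x y : Ω) :
    |f x - f y| / dist x y ≤ K :=
  div_le_of_le_mul₀ dist_nonneg K.coe_nonneg (by simpa [Real.dist_eq] using hf.dist_le_mul x y)

lemma isCoboundedUnder_abs_sub_div_dist (f : Ω → ℝ) (x : Ω) [(𝓝[≠] x).NeBot] :
    IsCoboundedUnder (· ≤ ·) (𝓝[≠] x) fun y => |f x - f y| / dist x y :=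
  isCoboundedUnder_le_of_le _ fun _ => by positivity

lemma nonneg_of_eventually_abs_sub_div_dist_le [(𝓝[≠] x).NeBot] {a : ℝ}
    (ha : ∀ᶠ y in 𝓝[≠] x, |f x - f y| / dist x y ≤ a) : 0 ≤ a := by
  obtain ⟨y, hy⟩ := ha.exists
  exact (div_nonneg (abs_nonneg _) dist_nonneg).trans hy

lemma gradMod_nonneg (f : Ω → ℝ) (x : Ω) : 0 ≤ gradMod f x := by
  rcases (𝓝[≠] x).eq_or_neBot with hx | hx
  · rw [gradMod_eq_zero_of_nhdsNE_eq_bot hx]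
  · exact Real.sInf_nonneg fun a ha => nonneg_of_eventually_abs_sub_div_dist_le ha

lemma gradMod_le_of_lipschitzWith (hf : LipschitzWith K f) (x : Ω) : gradMod f x ≤ K := by
  rcases (𝓝[≠] x).eq_or_neBot with hx | hx
  · simp [gradMod_eq_zero_of_nhdsNE_eq_bot hx]
  · exact limsup_le_of_le (isCoboundedUnder_abs_sub_div_dist f x)
      (Eventually.of_forall (abs_sub_div_dist_le_of_lipschitzWith hf x))

lemma gradMod_le_mul_of_eventually {c : ℝ} (hc : 0 ≤ c) (hg : LipschitzWith K g)
    (h : ∀ᶠ y in 𝓝 x, |f x - f y| ≤ c * |g x - g y|) : gradMod f x ≤ c * gradMod g x := by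
  rcases (𝓝[≠] x).eq_or_neBot with hx | hx
  · simp [gradMod_eq_zero_of_nhdsNE_eq_bot hx]
  have hbdd : IsBoundedUnder (· ≤ ·) (𝓝[≠] x) fun y => |g x - g y| / dist x y :=
    isBoundedUnder_of ⟨K, abs_sub_div_dist_le_of_lipschitzWith hg x⟩
  rw [gradMod, gradMod, (monotone_mul_left_of_nonneg hc).map_limsup_of_continuousAt _
    (continuous_const_mul c).continuousAt hbdd (isCoboundedUnder_abs_sub_div_dist g x)]
  refine limsup_le_limsup ?_ (isCoboundedUnder_abs_sub_div_dist f x) (isBoundedUnder_of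
    ⟨c * K, fun y => mul_le_mul_of_nonneg_left (abs_sub_div_dist_le_of_lipschitzWith hg x y) hc⟩)
  filter_upwards [nhdsWithin_le_nhds h] with y hy
  rw [Function.comp_apply, ← mul_div_assoc]
  exact div_le_div_of_nonneg_right hy dist_nonneg

lemma gradMod_comp_le {φ : ℝ → ℝ} {L : ℝ≥0} (hφ : LipschitzWith L φ) (hf : LipschitzWith K f)
    (x : Ω) : gradMod (φ ∘ f) x ≤ L * gradMod f x :=
  gradMod_le_mul_of_eventually L.coe_nonneg hf <| Eventually.of_forall fun y => by
    simpa [Real.dist_eq] using hφ.dist_le_mul (f x) (f y)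

lemma gradMod_eq_zero_of_eventually_const (h : ∀ᶠ y in 𝓝 x, f y = f x) : gradMod f x = 0 := by
  refine le_antisymm ?_ (gradMod_nonneg f x)
  simpa using gradMod_le_mul_of_eventually le_rfl (LipschitzWith.const (α := Ω) (0 : ℝ))
    (h.mono fun y hy => by simp [hy])

/-- The term `y = x` is `|0| / 0 = 0`, so the ball need not be punctured. -/
def ballSlope (f : Ω → ℝ) (r : ℝ) (x y : Ω) : ℝ :=
  if dist x y < r then |f x - f y| / dist x y else 0

def ballSlopeSup (f : Ω → ℝ) (r : ℝ) (x : Ω) : ℝ :=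
  ⨆ y, ballSlope f r x y

lemma ballSlope_nonneg (f : Ω → ℝ) (r : ℝ) (x y : Ω) : 0 ≤ ballSlope f r x y := by
  unfold ballSlope
  split_ifs <;> positivity

lemma bddAbove_range_ballSlope (hf : LipschitzWith K f) (r : ℝ) (x : Ω) :
    BddAbove (range (ballSlope f r x)) := by
  refine ⟨K, forall_mem_range.2 fun y => ?_⟩
  unfold ballSlope
  split_ifs
  exacts [abs_sub_div_dist_le_of_lipschitzWith hf x y, K.coe_nonneg]

lemma lowerSemicontinuous_ballSlope (hf : Continuous f) (r : ℝ) (y : Ω) :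
    LowerSemicontinuous fun x => ballSlope f r x y := by
  intro x c hc
  rcases lt_or_ge c 0 with hc0 | hc0
  · exact Eventually.of_forall fun x' => hc0.trans_le (ballSlope_nonneg f r x' y)
  dsimp only [ballSlope] at hc ⊢
  by_cases hxy : dist x y < r
  swap
  · rw [if_neg hxy] at hc
    exact absurd hc hc0.not_gt
  rw [if_pos hxy] at hc
  have hdist : dist x y ≠ 0 := fun h => by simp [h] at hc; linarith
  have hcont : ContinuousAt (fun x' => |f x' - f y| / dist x' y) x :=
    ((hf.sub continuous_const).abs.continuousAt).div
      (continuous_id.dist continuous_const).continuousAt hdist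
  filter_upwards [(isOpen_lt (continuous_id.dist continuous_const) continuous_const).mem_nhds hxy,
    hcont.eventually (lt_mem_nhds hc)] with x' hx' hcx'
  rwa [if_pos (show dist x' y < r from hx')]

lemma lowerSemicontinuous_ballSlopeSup (hf : LipschitzWith K f) (r : ℝ) :
    LowerSemicontinuous (ballSlopeSup f r) :=
  lowerSemicontinuous_ciSup (bddAbove_range_ballSlope hf r)
    (lowerSemicontinuous_ballSlope hf.continuous r)

lemma ballSlopeSup_nonneg (hf : LipschitzWith K f) (r : ℝ) (x : Ω) : 0 ≤ ballSlopeSup f r x :=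
  (ballSlope_nonneg f r x x).trans (le_ciSup (bddAbove_range_ballSlope hf r x) x)

lemma eventually_abs_sub_div_dist_le_ballSlopeSup (hf : LipschitzWith K f) {r : ℝ} (hr : 0 < r)
    (x : Ω) : ∀ᶠ y in 𝓝[≠] x, |f x - f y| / dist x y ≤ ballSlopeSup f r x := by
  filter_upwards [nhdsWithin_le_nhds (Metric.ball_mem_nhds x hr)] with y hy
  refine le_ciSup_of_le (bddAbove_range_ballSlope hf r x) y ?_
  rw [ballSlope, if_pos (by rwa [dist_comm])]

lemma iInf_ballSlopeSup_le (hf : LipschitzWith K f) {a : ℝ}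
    (ha : ∀ᶠ y in 𝓝[≠] x, |f x - f y| / dist x y ≤ a) (ha0 : 0 ≤ a) :
    ⨅ n : ℕ, ballSlopeSup f (1 / (n + 1)) x ≤ a := by
  obtain ⟨ε, hε, hball⟩ := Metric.eventually_nhds_iff.1 (eventually_nhdsWithin_iff.1 ha)
  obtain ⟨n, hn⟩ := exists_nat_one_div_lt hε
  have : Nonempty Ω := ⟨x⟩
  refine (ciInf_le ⟨0, forall_mem_range.2 fun m => ballSlopeSup_nonneg hf _ x⟩ n).trans
    (ciSup_le fun y => ?_)
  unfold ballSlope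
  split_ifs with hy
  · rcases eq_or_ne y x with rfl | hyx
    · simpa using ha0
    · exact hball (by rw [dist_comm]; exact hy.trans hn) hyx
  · exact ha0

lemma gradMod_eq_iInf_ballSlopeSup (hf : LipschitzWith K f) (x : Ω) :
    gradMod f x = ⨅ n : ℕ, ballSlopeSup f (1 / (n + 1)) x := by
  rcases (𝓝[≠] x).eq_or_neBot with hx | hx
  · rw [gradMod_eq_zero_of_nhdsNE_eq_bot hx]
    exact le_antisymm (le_ciInf fun n => ballSlopeSup_nonneg hf _ x)
      (iInf_ballSlopeSup_le hf (by simp [hx]) le_rfl)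
  refine le_antisymm (le_ciInf fun n => limsup_le_of_le (isCoboundedUnder_abs_sub_div_dist f x)
    (eventually_abs_sub_div_dist_le_ballSlopeSup hf (by positivity) x)) ?_
  rw [gradMod, limsup_eq]
  refine le_csInf ⟨K, show ∀ᶠ y in 𝓝[≠] x, _ from
    Eventually.of_forall (abs_sub_div_dist_le_of_lipschitzWith hf x)⟩ fun a ha =>
    iInf_ballSlopeSup_le hf ha (nonneg_of_eventually_abs_sub_div_dist_le ha)

variable [MeasurableSpace Ω] [OpensMeasurableSpace Ω] {μ : Measure Ω}

lemma measurable_gradMod (hf : LipschitzWith K f) : Measurable (gradMod f) := by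
  rw [funext (gradMod_eq_iInf_ballSlopeSup hf)]
  exact Measurable.iInf fun n => (lowerSemicontinuous_ballSlopeSup hf _).measurable

lemma integrable_gradMod [IsFiniteMeasure μ] (hf : LipschitzWith K f) :
    Integrable (gradMod f) μ :=
  .of_bound (measurable_gradMod hf).aestronglyMeasurable K <| Eventually.of_forall fun x => by
    rw [Real.norm_of_nonneg (gradMod_nonneg f x)]
    exact gradMod_le_of_lipschitzWith hf x

lemma Condition2.ae_gradMod_eq_zero_of_abs_eq (h : Condition2 μ) (hf : LipschitzWith K f)
    (c : ℝ) : ∀ᵐ x ∂μ, |f x| = c → gradMod f x = 0 := by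
  have hlevel : ∀ c', ∀ᵐ x ∂μ, f x = c' → gradMod f x = 0 := fun c' =>
    (ae_restrict_iff' (hf.continuous.measurable (measurableSet_singleton c'))).1 (h f ⟨K, hf⟩ c')
  filter_upwards [hlevel c, hlevel (-c)] with x hpos hneg hx
  exact (eq_or_eq_neg_of_abs_eq hx).elim hpos hneg

end GradMod

def levelRamp (s t u : ℝ) : ℝ :=
  max 0 (min 1 ((t - s)⁻¹ * (u - s)))

section LevelRamp

variable {s t u : ℝ}

lemma lipschitzWith_levelRamp (s t : ℝ) : LipschitzWith ‖(t - s)⁻¹‖₊ (levelRamp s t) := by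
  have hlin : LipschitzWith ‖(t - s)⁻¹‖₊ fun u => (t - s)⁻¹ * (u - s) :=
    LipschitzWith.of_dist_le_mul fun u v => by
      rw [Real.dist_eq, Real.dist_eq, ← mul_sub, sub_sub_sub_cancel_right, abs_mul]
      simp
  exact (hlin.const_min 1).const_max 0

lemma levelRamp_mem_Icc : levelRamp s t u ∈ Icc 0 1 :=
  ⟨le_max_left _ _, max_le zero_le_one (min_le_left _ _)⟩

lemma levelRamp_of_le (hst : s < t) (hu : u ≤ s) : levelRamp s t u = 0 := by
  have : (t - s)⁻¹ * (u - s) ≤ 0 :=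
    mul_nonpos_of_nonneg_of_nonpos (inv_nonneg.2 (sub_nonneg.2 hst.le)) (sub_nonpos.2 hu)
  rw [levelRamp, min_eq_right (this.trans zero_le_one), max_eq_left this]

lemma levelRamp_of_ge (hst : s < t) (hu : t ≤ u) : levelRamp s t u = 1 := by
  have : 1 ≤ (t - s)⁻¹ * (u - s) := by
    rw [← div_eq_inv_mul, one_le_div (sub_pos.2 hst)]
    linarith
  rw [levelRamp, min_eq_left this, max_eq_right zero_le_one]

end LevelRamp

section Rearrangement

variable {α : Type*} [MeasurableSpace α] {μ : Measure α}

lemma measure_lt_le_of_forall_gt {g : α → ℝ} {t : ℝ} {m : ℝ≥0∞}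
    (h : ∀ r, t < r → μ {x | r < g x} ≤ m) : μ {x | t < g x} ≤ m := by
  have hunion : {x | t < g x} = ⋃ n : ℕ, {x | t + 1 / (n + 1) < g x} := by
    ext x
    simp only [mem_ofPred_eq, mem_iUnion]
    refine ⟨fun hx => ?_, fun ⟨n, hn⟩ => (le_add_of_nonneg_right (by positivity)).trans_lt hn⟩
    obtain ⟨n, hn⟩ := exists_nat_one_div_lt (sub_pos.2 hx)
    exact ⟨n, by linarith⟩
  have hmono : Monotone fun n : ℕ => {x | t + 1 / (n + 1) < g x} :=
    fun n k hnk x (hx : t + 1 / (n + 1) < g x) =>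
      show t + 1 / ((k : ℝ) + 1) < g x from lt_of_le_of_lt (by gcongr) hx
  rw [hunion, hmono.measure_iUnion]
  exact iSup_le fun n => h _ (lt_add_of_pos_right t (by positivity))

lemma le_measure_le_of_forall_lt [IsFiniteMeasure μ] {g : α → ℝ} (hg : Measurable g) {t : ℝ}
    {m : ℝ≥0∞} (h : ∀ r < t, m ≤ μ {x | r < g x}) : m ≤ μ {x | t ≤ g x} := by
  have hinter : {x | t ≤ g x} = ⋂ n : ℕ, {x | t - 1 / (n + 1) < g x} := by
    ext x
    simp only [mem_ofPred_eq, mem_iInter]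
    refine ⟨fun hx n => (sub_lt_self t (by positivity)).trans_le hx, fun hx => ?_⟩
    refine le_of_forall_pos_lt_add fun ε hε => ?_
    obtain ⟨n, hn⟩ := exists_nat_one_div_lt hε
    linarith [hx n]
  have hanti : Antitone fun n : ℕ => {x | t - 1 / (n + 1) < g x} :=
    fun n k hnk x (hx : t - 1 / (k + 1) < g x) =>
      show t - 1 / ((n : ℝ) + 1) < g x from lt_of_le_of_lt (by gcongr) hx
  rw [hinter, hanti.measure_iInter
    (fun n => (measurableSet_lt measurable_const hg).nullMeasurableSet) ⟨0, measure_ne_top μ _⟩]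
  exact le_iInf fun n => h _ (sub_lt_self t (by positivity))

lemma tendsto_measure_lt_atTop [IsFiniteMeasure μ] {g : α → ℝ} (hg : Measurable g) :
    Tendsto (fun r => μ {x | r < g x}) atTop (𝓝 0) := by
  have hempty : ⋂ r : ℝ, {x | r < g x} = ∅ :=
    eq_empty_of_forall_notMem fun x hx => lt_irrefl (g x) (mem_iInter.1 hx (g x))
  have := tendsto_measure_iInter_atTop (μ := μ) (s := fun r : ℝ => {x | r < g x})
    (fun r => (measurableSet_lt measurable_const hg).nullMeasurableSet)
    (fun r r' hrr' x (hx : r' < g x) => show r < g x from lt_of_le_of_lt hrr' hx)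
    ⟨0, measure_ne_top μ _⟩
  rwa [hempty, measure_empty] at this

variable {f : α → ℝ} {s : ℝ}

lemma exists_distrib_le [IsFiniteMeasure μ] (hf : Measurable f) (hs : 0 < s) :
    ∃ t, 0 ≤ t ∧ distrib μ f t ≤ s := by
  obtain ⟨t, ht, ht0⟩ := (((tendsto_measure_lt_atTop (μ := μ) hf.abs).eventually
    (gt_mem_nhds (ENNReal.ofReal_pos.2 hs))).and (eventually_ge_atTop 0)).exists
  exact ⟨t, ht0, ENNReal.toReal_le_of_le_ofReal hs.le ht.le⟩

lemma distrib_rearr_le [IsFiniteMeasure μ] (hf : Measurable f) (hs : 0 < s) :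
    distrib μ f (rearr μ f s) ≤ s := by
  refine ENNReal.toReal_le_of_le_ofReal hs.le
    (measure_lt_le_of_forall_gt (μ := μ) fun r hr => ?_)
  obtain ⟨t, ⟨-, ht⟩, htr⟩ := exists_lt_of_csInf_lt (exists_distrib_le hf hs) hr
  calc μ {x | r < |f x|} ≤ μ {x | t < |f x|} := measure_mono fun x hx => htr.trans hx
    _ ≤ ENNReal.ofReal s := (ENNReal.le_ofReal_iff_toReal_le (measure_ne_top _ _) hs.le).2 ht

lemma le_measureReal_rearr_le_abs [IsProbabilityMeasure μ] (hf : Measurable f) (hs : s ≤ 1) :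
    s ≤ μ.real {x | rearr μ f s ≤ |f x|} := by
  rw [measureReal_def, ← ENNReal.ofReal_le_iff_le_toReal (measure_ne_top _ _)]
  refine le_measure_le_of_forall_lt (μ := μ) hf.abs fun r hr => ?_
  rcases lt_or_ge r 0 with hr0 | hr0
  · simpa [fun x => hr0.trans_le (abs_nonneg (f x))] using hs
  · have : s < distrib μ f r :=
      lt_of_not_ge fun h => hr.not_ge (csInf_le ⟨0, fun _ h => h.1⟩ ⟨hr0, h⟩)
    exact ENNReal.ofReal_le_of_le_toReal this.le

lemma one_sub_le_measureReal_abs_le_rearr [IsProbabilityMeasure μ] (hf : Measurable f)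
    (hs : 0 < s) : 1 - s ≤ μ.real {x | |f x| ≤ rearr μ f s} := by
  have hcompl : {x | |f x| ≤ rearr μ f s} = {x | rearr μ f s < |f x|}ᶜ := by ext; simp
  rw [hcompl, probReal_compl_eq_one_sub (measurableSet_lt measurable_const hf.abs)]
  linarith [distrib_rearr_le (μ := μ) hf hs,
    show distrib μ f (rearr μ f s) = μ.real {x | rearr μ f s < |f x|} from rfl]

end Rearrangement

section Capacity

variable {Ω : Type*} [MetricSpace Ω] [MeasurableSpace Ω] {μ : Measure Ω} {q a b : ℝ}

lemma capProfile_nonneg (μ : Measure Ω) (q a b : ℝ) : 0 ≤ capProfile μ q a b :=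
  Real.sInf_nonneg fun _ ⟨_, _, _, _, _, hr⟩ =>
    hr ▸ Real.rpow_nonneg (integral_nonneg fun _ => by positivity) _

lemma capProfile_le {Φ : Ω → ℝ} (hΦ : LipschitzOnBalls Φ) (hΦ01 : ∀ x, Φ x ∈ Icc 0 1)
    (h1 : a ≤ μ.real {x | Φ x = 1}) (h0 : 1 - b ≤ μ.real {x | Φ x = 0}) :
    capProfile μ q a b ≤ (∫ x, |gradMod Φ x| ^ q ∂μ) ^ (1 / q) :=
  csInf_le ⟨0, fun _ ⟨_, _, _, _, _, hr⟩ =>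
    hr ▸ Real.rpow_nonneg (integral_nonneg fun _ => by positivity) _⟩ ⟨Φ, hΦ, hΦ01, h1, h0, rfl⟩

variable [OpensMeasurableSpace Ω] {f : Ω → ℝ} {K : ℝ≥0} {s t : ℝ}

lemma ae_gradMod_levelRamp_le (h2 : Condition2 μ) (hf : LipschitzWith K f) (hst : s < t) :
    ∀ᵐ x ∂μ, gradMod (fun x => levelRamp s t |f x|) x ≤
      (t - s)⁻¹ * {x | s < |f x| ∧ |f x| < t}.indicator (gradMod f) x := by
  have hcomp : ∀ x, gradMod (fun x => levelRamp s t |f x|) x ≤ (t - s)⁻¹ * gradMod f x := by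
    intro x
    refine (gradMod_comp_le (φ := fun u => levelRamp s t |u|)
      ((lipschitzWith_levelRamp s t).comp lipschitzWith_one_norm) hf x).trans_eq ?_
    simp [abs_of_pos (sub_pos.2 hst)]
  have hflat : ∀ x, |f x| < s ∨ t < |f x| → gradMod (fun x => levelRamp s t |f x|) x = 0 := by
    intro x hx
    refine gradMod_eq_zero_of_eventually_const ?_
    rcases hx with hx | hx
    · filter_upwards [hf.continuous.abs.continuousAt.eventually (gt_mem_nhds hx)] with y hy
      rw [levelRamp_of_le hst hy.le, levelRamp_of_le hst hx.le]
    · filter_upwards [hf.continuous.abs.continuousAt.eventually (lt_mem_nhds hx)] with y hy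
      rw [levelRamp_of_ge hst hy.le, levelRamp_of_ge hst hx.le]
  filter_upwards [h2.ae_gradMod_eq_zero_of_abs_eq hf s, h2.ae_gradMod_eq_zero_of_abs_eq hf t]
    with x hs ht
  by_cases hx : s < |f x| ∧ |f x| < t
  · rw [indicator_of_mem (show x ∈ {x | s < |f x| ∧ |f x| < t} from hx)]
    exact hcomp x
  rw [indicator_of_notMem (show x ∉ {x | s < |f x| ∧ |f x| < t} from hx), mul_zero]
  rcases lt_trichotomy |f x| s with hlt | heq | hgt
  · exact (hflat x (Or.inl hlt)).le
  · simpa [hs heq] using hcomp x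
  rcases lt_trichotomy |f x| t with hlt' | heq' | hgt'
  · exact absurd ⟨hgt, hlt'⟩ hx
  · simpa [ht heq'] using hcomp x
  · exact (hflat x (Or.inr hgt')).le

lemma integral_gradMod_levelRamp_le [IsFiniteMeasure μ] (h2 : Condition2 μ)
    (hf : LipschitzWith K f) (hst : s < t) :
    ∫ x, gradMod (fun x => levelRamp s t |f x|) x ∂μ ≤
      (t - s)⁻¹ * ∫ x in {x | s < |f x| ∧ |f x| < t}, gradMod f x ∂μ := by
  have hS : MeasurableSet {x | s < |f x| ∧ |f x| < t} :=
    (measurableSet_lt measurable_const hf.continuous.measurable.abs).inter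
      (measurableSet_lt hf.continuous.measurable.abs measurable_const)
  rw [← integral_indicator hS, ← integral_const_mul]
  exact integral_mono_of_nonneg (Eventually.of_forall fun x => gradMod_nonneg _ x)
    (((integrable_gradMod hf).indicator hS).const_mul _) (ae_gradMod_levelRamp_le h2 hf hst)

lemma capProfile_one_le_integral_gradMod_levelRamp [IsProbabilityMeasure μ]
    (hf : LipschitzWith K f) (ha : 0 < a) (hab : a < b) (hb : b < 1)
    (hlt : rearr μ f b < rearr μ f a) :
    capProfile μ 1 a b ≤
      ∫ x, gradMod (fun x => levelRamp (rearr μ f b) (rearr μ f a) |f x|) x ∂μ := by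
  have hΦ : LipschitzWith _ fun x => levelRamp (rearr μ f b) (rearr μ f a) |f x| :=
    (lipschitzWith_levelRamp _ _).comp (lipschitzWith_one_norm.comp hf)
  refine (capProfile_le (q := 1) (fun _ _ => ⟨_, hΦ.lipschitzOnWith⟩)
    (fun _ => levelRamp_mem_Icc) ?_ ?_).trans_eq ?_
  · calc a ≤ μ.real {x | rearr μ f a ≤ |f x|} :=
          le_measureReal_rearr_le_abs hf.continuous.measurable (by linarith)
      _ ≤ _ := measureReal_mono fun x hx => levelRamp_of_ge hlt hx
  · calc 1 - b ≤ μ.real {x | |f x| ≤ rearr μ f b} :=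
          one_sub_le_measureReal_abs_le_rearr hf.continuous.measurable (ha.trans hab)
      _ ≤ _ := measureReal_mono fun x hx => levelRamp_of_le hlt hx
  · simp [abs_of_nonneg (gradMod_nonneg _ _)]

end Capacity

theorem capacity_oscillation_estimate_general
    {Ω : Type*} [MetricSpace Ω]
    [MeasurableSpace Ω] [BorelSpace Ω] (μ : Measure Ω) [IsProbabilityMeasure μ]
    (h2 : Condition2 μ)
    (f : Ω → ℝ) (hfLip : ∃ K, LipschitzWith K f)
    (a b : ℝ) (ha : 0 < a) (hab : a < b) (hb : b < 1) :
    capProfile μ 1 a b * (rearr μ f a - rearr μ f b) ≤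
      ∫ x in {x | rearr μ f b < |f x| ∧ |f x| < rearr μ f a}, gradMod f x ∂μ := by
  obtain ⟨K, hf⟩ := hfLip
  rcases le_or_gt (rearr μ f a) (rearr μ f b) with hle | hlt
  · exact (mul_nonpos_of_nonneg_of_nonpos (capProfile_nonneg μ 1 a b) (sub_nonpos.2 hle)).trans
      (integral_nonneg fun x => gradMod_nonneg f x)
  calc capProfile μ 1 a b * (rearr μ f a - rearr μ f b)
      ≤ ((rearr μ f a - rearr μ f b)⁻¹ *
          ∫ x in {x | rearr μ f b < |f x| ∧ |f x| < rearr μ f a}, gradMod f x ∂μ) *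
        (rearr μ f a - rearr μ f b) :=
        mul_le_mul_of_nonneg_right
          ((capProfile_one_le_integral_gradMod_levelRamp hf ha hab hb hlt).trans
            (integral_gradMod_levelRamp_le h2 hf hlt)) (sub_nonneg.2 hlt.le)
    _ = _ := by field_simp [(sub_pos.2 hlt).ne']

/-- Under Conditions 1' and 2, for `f ∈ Lip(Ω) ∩ L¹(Ω)` and `0 < a < b < 1`,
`cap₁(a,b) · (f*_μ(a) - f*_μ(b)) ≤ ∫_{{f*_μ(b) < |f| < f*_μ(a)}} |∇f| dμ`. -/
theorem capacity_oscillation_estimate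
    {Ω : Type*} [MetricSpace Ω] [ConnectedSpace Ω] [TopologicalSpace.SeparableSpace Ω]
    [MeasurableSpace Ω] [BorelSpace Ω] (μ : Measure Ω) [IsProbabilityMeasure μ] [NullSingletonClass μ]
    (h1 : Condition1' μ) (h2 : Condition2 μ)
    (f : Ω → ℝ) (hfLip : ∃ K, LipschitzWith K f) (hfL1 : Integrable f μ)
    (a b : ℝ) (ha : 0 < a) (hab : a < b) (hb : b < 1) :
    capProfile μ 1 a b * (rearr μ f a - rearr μ f b) ≤
      ∫ x in {x | rearr μ f b < |f x| ∧ |f x| < rearr μ f a}, gradMod f x ∂μ :=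
  capacity_oscillation_estimate_general μ h2 f hfLip a b ha hab hb
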